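/- Let (G_n) be a sequence of finite (q_n+1)-regular graphs on vertex sets V_n with |V_n| \to \infty, and suppose the normalized empirical spectral measures \mu_n (of q_n^{-1/2}A_n) converge to the semicircle law \mu_\infty in the p-Wasserstein distance for every p \in [1,\infty). Then q_n = |V_n|^{o(1)}, i.e. \log q_n / \log |V_n| \to 0. -/

import Mathlib

open MeasureTheory Filter
open scoped Real Classical

/-- The Wigner semicircle distribution: density `(1/(2π))√(4-x²)` on `[-2,2]`. -/
noncomputable def semicircle : Measure ℝ :=
  volume.withDensity fun x =>
    ENNReal.ofReal (if x ∈ Set.Icc (-2 : ℝ) 2 then (1 / (2 * π)) * Real.sqrt (4 - x ^ 2) else 0)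

/-- The `p`-Wasserstein distance between two measures on `ℝ`, defined as the infimum
over all couplings `γ` of `(∫ |x-y|^p dγ)^{1/p}`. -/
noncomputable def wassersteinDist (p : ℝ) (μ ν : Measure ℝ) : ℝ :=
  sInf {c : ℝ | ∃ γ : Measure (ℝ × ℝ), γ.map Prod.fst = μ ∧ γ.map Prod.snd = ν ∧
    c = (∫ z : ℝ × ℝ, |z.1 - z.2| ^ p ∂γ) ^ (1 / p)}

/-- The normalized empirical spectral distribution of a `(q+1)`-regular graph `G` on
`N` vertices: `(1/N) ∑_i δ_{q^{-1/2} λ_i}`, where `λ_i` are the adjacency eigenvalues. -/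
noncomputable def normalizedESD {N : ℕ} (G : SimpleGraph (Fin N)) (q : ℕ)
    (hA : ((G.adjMatrix ℝ)).IsHermitian) : Measure ℝ :=
  (N : ENNReal)⁻¹ • ∑ i : Fin N, Measure.dirac ((Real.sqrt q)⁻¹ * hA.eigenvalues i)

/-!
The `2r`-th moment of `μ_n` is `tr(A^{2r}) / (N q^r)`. Since `A^r` is symmetric with all row
sums `(q+1)^r`, Cauchy–Schwarz on each row gives `tr(A^{2r}) ≥ (q+1)^{2r}`, so the moment is at
least `q^r / N`. On the other hand, a coupling of `μ_n` with the semicircle law (supported on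
`[-2, 2]`) of `L^{2r}` cost below `1` bounds the same moment by a constant `C_r`. Hence eventually
`q^r ≤ C_r N`, i.e. `log q / log N ≤ (1 + log C_r / log N) / r`, and `r` is arbitrary.
-/

open scoped Matrix

namespace Matrix.IsHermitian

theorem trace_pow_eq_sum_eigenvalues_pow {𝕜 n : Type*} [RCLike 𝕜] [Fintype n] [DecidableEq n]
    {A : Matrix n n 𝕜} (hA : A.IsHermitian) (k : ℕ) :
    (A ^ k).trace = ∑ i, (hA.eigenvalues i : 𝕜) ^ k := by
  conv_lhs => rw [hA.spectral_theorem, ← map_pow, Unitary.conjStarAlgAut_apply, trace_mul_cycle,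
    Unitary.coe_star_mul_self, one_mul, diagonal_pow, trace_diagonal]
  simp

end Matrix.IsHermitian

theorem Matrix.sq_le_trace_mul_transpose {n : Type*} [Fintype n] [Nonempty n]
    (B : Matrix n n ℝ) {s : ℝ} (hs : ∀ i, ∑ j, B i j = s) : s ^ 2 ≤ (B * Bᵀ).trace := by
  have htrace : (B * Bᵀ).trace = ∑ i, ∑ j, B i j ^ 2 := by
    simp only [trace, diag_apply, mul_apply, transpose_apply, sq]
  have hcard : (0 : ℝ) < Fintype.card n := by exact_mod_cast Fintype.card_pos
  refine le_of_mul_le_mul_left ?_ hcard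
  calc (Fintype.card n : ℝ) * s ^ 2 = ∑ i : n, (∑ j, B i j) ^ 2 := by simp [hs]
    _ ≤ ∑ i : n, Fintype.card n * ∑ j, B i j ^ 2 :=
      Finset.sum_le_sum fun i _ => sq_sum_le_card_mul_sum_sq
    _ = Fintype.card n * (B * Bᵀ).trace := by rw [htrace, Finset.mul_sum]

namespace SimpleGraph.IsRegularOfDegree

variable {V : Type*} [Fintype V] [DecidableEq V] {G : SimpleGraph V} [DecidableRel G.Adj] {d : ℕ}

theorem adjMatrix_pow_mulVec_const {R : Type*} [CommSemiring R] (hd : G.IsRegularOfDegree d)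
    (k : ℕ) (a : R) :
    G.adjMatrix R ^ k *ᵥ Function.const V a = Function.const V ((d : R) ^ k * a) := by
  induction k with
  | zero => simp
  | succ k ih =>
    ext v
    rw [pow_succ', ← Matrix.mulVec_mulVec, ih, adjMatrix_mulVec_const_apply_of_regular hd]
    simp [pow_succ', mul_assoc]

theorem sum_adjMatrix_pow_apply {R : Type*} [CommSemiring R] (hd : G.IsRegularOfDegree d)
    (k : ℕ) (v : V) : ∑ u, (G.adjMatrix R ^ k) v u = (d : R) ^ k := by
  simpa [Matrix.mulVec, dotProduct] using congrFun (adjMatrix_pow_mulVec_const hd k (1 : R)) v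

theorem pow_le_trace_adjMatrix_pow [Nonempty V] (hd : G.IsRegularOfDegree d) (r : ℕ) :
    (d : ℝ) ^ (2 * r) ≤ (G.adjMatrix ℝ ^ (2 * r)).trace := by
  have hsymm : (G.adjMatrix ℝ ^ r)ᵀ = G.adjMatrix ℝ ^ r := by
    rw [Matrix.transpose_pow, transpose_adjMatrix]
  rw [mul_comm, pow_mul, pow_mul, sq (G.adjMatrix ℝ ^ r)]
  nth_rw 2 [← hsymm]
  exact Matrix.sq_le_trace_mul_transpose _ (sum_adjMatrix_pow_apply hd r)

end SimpleGraph.IsRegularOfDegree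

section NormalizedESD

variable {N : ℕ} (G : SimpleGraph (Fin N)) (q : ℕ) (hA : (G.adjMatrix ℝ).IsHermitian)

theorem isProbabilityMeasure_normalizedESD (hN : N ≠ 0) :
    IsProbabilityMeasure (normalizedESD G q hA) := by
  constructor
  simp [normalizedESD, ENNReal.inv_mul_cancel, hN]

theorem integrable_normalizedESD (hN : N ≠ 0) (f : ℝ → ℝ) :
    Integrable f (normalizedESD G q hA) :=
  (integrable_finsetSum_measure.2 fun _ _ => integrable_dirac enorm_lt_top).smul_measure
    (by simpa using hN)

theorem integral_pow_normalizedESD (k : ℕ) :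
    ∫ x, x ^ k ∂normalizedESD G q hA = (√q)⁻¹ ^ k * (G.adjMatrix ℝ ^ k).trace / N := by
  rw [normalizedESD, integral_smul_measure, integral_finsetSum_measure
    fun _ _ => integrable_dirac enorm_lt_top, hA.trace_pow_eq_sum_eigenvalues_pow]
  simp [mul_pow, Finset.mul_sum, div_eq_inv_mul]

theorem pow_div_le_integral_pow_normalizedESD (hN : N ≠ 0)
    (hreg : G.IsRegularOfDegree (q + 1)) (r : ℕ) :
    (q : ℝ) ^ r / N ≤ ∫ x, x ^ (2 * r) ∂normalizedESD G q hA := by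
  have : Nonempty (Fin N) := Fin.pos_iff_nonempty.mp (Nat.pos_of_ne_zero hN)
  have hscale : (√q)⁻¹ ^ (2 * r) = ((q : ℝ) ^ r)⁻¹ := by
    rw [pow_mul, inv_pow, Real.sq_sqrt q.cast_nonneg, inv_pow]
  have htrace : (q : ℝ) ^ r * (q : ℝ) ^ r ≤ (G.adjMatrix ℝ ^ (2 * r)).trace :=
    calc (q : ℝ) ^ r * (q : ℝ) ^ r = (q : ℝ) ^ (2 * r) := by ring
      _ ≤ ((q + 1 : ℕ) : ℝ) ^ (2 * r) := pow_le_pow_left₀ q.cast_nonneg (by simp) _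
      _ ≤ (G.adjMatrix ℝ ^ (2 * r)).trace := hreg.pow_le_trace_adjMatrix_pow r
  calc (q : ℝ) ^ r / N = ((q : ℝ) ^ r)⁻¹ * ((q : ℝ) ^ r * (q : ℝ) ^ r) / N := by
        rw [inv_mul_eq_div, mul_self_div_self]
    _ ≤ ((q : ℝ) ^ r)⁻¹ * (G.adjMatrix ℝ ^ (2 * r)).trace / N := by gcongr
    _ = ∫ x, x ^ (2 * r) ∂normalizedESD G q hA := by
        rw [integral_pow_normalizedESD, hscale]

end NormalizedESD

theorem integral_sqrt_four_sub_sq : ∫ x in (-2 : ℝ)..2, √(4 - x ^ 2) = 2 * π := by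
  have hrescale : ∀ x : ℝ, √(4 - x ^ 2) = 2 * √(1 - (x / 2) ^ 2) := fun x => by
    rw [show (4 : ℝ) - x ^ 2 = 2 ^ 2 * (1 - (x / 2) ^ 2) by ring, Real.sqrt_mul (by positivity),
      Real.sqrt_sq zero_le_two]
  simp_rw [hrescale]
  rw [intervalIntegral.integral_const_mul,
    intervalIntegral.integral_comp_div (fun u => √(1 - u ^ 2)) two_ne_zero]
  norm_num [integral_sqrt_one_sub_sq]
  ring

theorem semicircle_density_measurable : Measurable fun x : ℝ =>
    ENNReal.ofReal (if x ∈ Set.Icc (-2 : ℝ) 2 then (1 / (2 * π)) * √(4 - x ^ 2) else 0) :=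
  (Measurable.ite measurableSet_Icc (by fun_prop) measurable_const).ennreal_ofReal

instance : IsProbabilityMeasure semicircle := by
  constructor
  have hdensity :
      (fun x : ℝ => if x ∈ Set.Icc (-2 : ℝ) 2 then (1 / (2 * π)) * √(4 - x ^ 2) else 0)
        = (Set.Icc (-2 : ℝ) 2).indicator fun x => (1 / (2 * π)) * √(4 - x ^ 2) := by
    ext x; simp [Set.indicator_apply]
  have hint : Integrable fun x : ℝ =>
      if x ∈ Set.Icc (-2 : ℝ) 2 then (1 / (2 * π)) * √(4 - x ^ 2) else 0 := by
    rw [hdensity]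
    exact (Continuous.integrableOn_Icc (by fun_prop)).integrable_indicator measurableSet_Icc
  rw [semicircle, withDensity_apply _ .univ, Measure.restrict_univ,
    ← ofReal_integral_eq_lintegral_ofReal hint (.of_forall fun x => by dsimp only; positivity),
    hdensity, integral_indicator measurableSet_Icc, integral_Icc_eq_integral_Ioc,
    ← intervalIntegral.integral_of_le (by norm_num), intervalIntegral.integral_const_mul,
    integral_sqrt_four_sub_sq]
  field_simp
  simp

theorem ae_abs_le_two_semicircle : ∀ᵐ y ∂semicircle, |y| ≤ 2 := by
  refine (ae_withDensity_iff semicircle_density_measurable).2 (.of_forall fun y hy => ?_)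
  by_contra hout
  have hy' : y ∉ Set.Icc (-2 : ℝ) 2 := fun h => hout (abs_le.2 h)
  simp [hy'] at hy

theorem exists_coupling_of_wassersteinDist_lt {p w : ℝ} {μ ν : Measure ℝ}
    [IsProbabilityMeasure μ] [IsProbabilityMeasure ν] (h : wassersteinDist p μ ν < w) :
    ∃ γ : Measure (ℝ × ℝ), γ.map Prod.fst = μ ∧ γ.map Prod.snd = ν ∧
      (∫ z, |z.1 - z.2| ^ p ∂γ) ^ (1 / p) < w := by
  have hproduct : (∫ z, |z.1 - z.2| ^ p ∂μ.prod ν) ^ (1 / p) ∈ {c : ℝ | ∃ γ : Measure (ℝ × ℝ),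
      γ.map Prod.fst = μ ∧ γ.map Prod.snd = ν ∧ c = (∫ z, |z.1 - z.2| ^ p ∂γ) ^ (1 / p)} :=
    ⟨μ.prod ν, by simp, by simp, rfl⟩
  obtain ⟨c, ⟨γ, hfst, hsnd, rfl⟩, hc⟩ := exists_lt_of_csInf_lt ⟨_, hproduct⟩ h
  exact ⟨γ, hfst, hsnd, hc⟩

/-- Integrability of `|x| ^ k` makes the transport cost `∫ |x - y| ^ k ∂γ` a genuine integral
rather than the Bochner junk value `0`. -/
theorem integral_abs_pow_le_of_wassersteinDist_lt {μ ν : Measure ℝ} [IsProbabilityMeasure μ]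
    [IsProbabilityMeasure ν] {k : ℕ} (hk : k ≠ 0) {w B : ℝ}
    (hμ : Integrable (fun x => |x| ^ k) μ) (hν : ∀ᵐ y ∂ν, |y| ≤ B)
    (hW : wassersteinDist k μ ν < w) :
    ∫ x, |x| ^ k ∂μ ≤ 2 ^ (k - 1) * (w ^ k + B ^ k) := by
  obtain ⟨γ, hfst, hsnd, hcost⟩ := exists_coupling_of_wassersteinDist_lt hW
  have : IsProbabilityMeasure (γ.map Prod.fst) := hfst ▸ inferInstance
  have : IsProbabilityMeasure γ := Measure.isProbabilityMeasure_of_map Prod.fst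
  have hcost : ∫ z, |z.1 - z.2| ^ k ∂γ < w ^ k := by
    have hI : 0 ≤ ∫ z, |z.1 - z.2| ^ k ∂γ := integral_nonneg fun z => by positivity
    simp only [Real.rpow_natCast, one_div] at hcost
    calc ∫ z, |z.1 - z.2| ^ k ∂γ = ((∫ z, |z.1 - z.2| ^ k ∂γ) ^ (k⁻¹ : ℝ)) ^ k :=
          (Real.rpow_inv_natCast_pow hI hk).symm
      _ < w ^ k := pow_lt_pow_left₀ hcost (by positivity) hk
  have hint₁ : Integrable (fun z : ℝ × ℝ => |z.1| ^ k) γ := by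
    rw [← hfst] at hμ
    exact (integrable_map_measure (g := fun x : ℝ => |x| ^ k) (by fun_prop) (by fun_prop)).1 hμ
  have hB : ∀ᵐ z ∂γ, |z.2| ≤ B := by
    rw [← hsnd] at hν
    exact ae_of_ae_map (by fun_prop) hν
  have hint₂ : Integrable (fun z : ℝ × ℝ => |z.2| ^ k) γ :=
    .of_bound (by fun_prop) (B ^ k) (hB.mono fun z hz => by
      rw [Real.norm_eq_abs, abs_pow, abs_abs]
      exact pow_le_pow_left₀ (abs_nonneg _) hz k)
  have hint₁₂ : Integrable (fun z : ℝ × ℝ => |z.1 - z.2| ^ k) γ :=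
    ((hint₁.add hint₂).const_mul (2 ^ (k - 1))).mono' (by fun_prop) (.of_forall fun z => by
      rw [Real.norm_eq_abs, abs_pow, abs_abs]
      exact (pow_le_pow_left₀ (abs_nonneg _) (abs_sub _ _) k).trans
        (add_pow_le (abs_nonneg _) (abs_nonneg _) k))
  have hmoment₂ : ∫ z, |z.2| ^ k ∂γ ≤ B ^ k :=
    (integral_mono_ae hint₂ (integrable_const _)
      (hB.mono fun z hz => pow_le_pow_left₀ (abs_nonneg _) hz k)).trans_eq (by simp)
  calc ∫ x, |x| ^ k ∂μ = ∫ z, |z.1| ^ k ∂γ := by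
        rw [← hfst, integral_map (by fun_prop) (by fun_prop)]
    _ ≤ ∫ z, 2 ^ (k - 1) * (|z.1 - z.2| ^ k + |z.2| ^ k) ∂γ :=
        integral_mono hint₁ ((hint₁₂.add hint₂).const_mul _) fun z =>
          (pow_le_pow_left₀ (abs_nonneg _) (by simpa using abs_add_le (z.1 - z.2) z.2) k).trans
            (add_pow_le (abs_nonneg _) (abs_nonneg _) k)
    _ = 2 ^ (k - 1) * (∫ z, |z.1 - z.2| ^ k ∂γ + ∫ z, |z.2| ^ k ∂γ) := by
        rw [integral_const_mul, integral_add hint₁₂ hint₂]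
    _ ≤ 2 ^ (k - 1) * (w ^ k + B ^ k) := by gcongr

theorem tendsto_log_div_log_of_pow_le_const_mul (q N : ℕ → ℕ) (hN : Tendsto N atTop atTop)
    (hbound : ∀ r : ℕ, 0 < r → ∃ C : ℝ, ∀ᶠ n in atTop, (q n : ℝ) ^ r ≤ C * N n) :
    Tendsto (fun n => Real.log (q n) / Real.log (N n)) atTop (nhds 0) := by
  have hlogN : Tendsto (fun n => Real.log (N n)) atTop atTop :=
    Real.tendsto_log_atTop.comp (tendsto_natCast_atTop_atTop.comp hN)
  refine tendsto_order.2 ⟨fun a ha => .of_forall fun n => ha.trans_le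
    (div_nonneg (Real.log_natCast_nonneg _) (Real.log_natCast_nonneg _)), fun b hb => ?_⟩
  obtain ⟨r, hr⟩ := exists_nat_one_div_lt hb
  obtain ⟨C, hC⟩ := hbound (r + 1) r.succ_pos
  have hlim : Tendsto (fun n => (Real.log C / Real.log (N n) + 1) / (r + 1 : ℝ)) atTop
      (nhds ((0 + 1) / (r + 1))) :=
    ((tendsto_const_nhds.div_atTop hlogN).add_const 1).div_const _
  filter_upwards [hC, hlim.eventually (gt_mem_nhds (by simpa using hr)),
    hlogN.eventually_gt_atTop 0] with n hqC hlt hlogN_pos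
  rcases (q n).eq_zero_or_pos with hq | hq
  · simpa [hq] using hb
  have hNpos : (0 : ℝ) < N n :=
    Nat.cast_pos.2 (Nat.pos_of_ne_zero fun h => by simp [h] at hlogN_pos)
  have hCpos : 0 < C := by
    have : (1 : ℝ) ≤ C * N n := (one_le_pow₀ (by exact_mod_cast hq)).trans hqC
    nlinarith
  have hlog : (r + 1) * Real.log (q n) ≤ Real.log C + Real.log (N n) := by
    rw [← Real.log_mul hCpos.ne' hNpos.ne', ← Real.log_rpow (by positivity)]
    exact Real.log_le_log (by positivity) (by exact_mod_cast hqC)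
  refine lt_of_le_of_lt ?_ hlt
  calc Real.log (q n) / Real.log (N n)
      = (r + 1) * Real.log (q n) / Real.log (N n) / (r + 1) := by field_simp
    _ ≤ (Real.log C + Real.log (N n)) / Real.log (N n) / (r + 1) := by gcongr
    _ = (Real.log C / Real.log (N n) + 1) / (r + 1) := by rw [add_div, div_self hlogN_pos.ne']

theorem wasserstein_convergence_implies_subpolynomial_degree
    (N q : ℕ → ℕ) (G : ∀ n, SimpleGraph (Fin (N n)))
    (hreg : ∀ n, (G n).IsRegularOfDegree (q n + 1))
    (hA : ∀ n, (((G n).adjMatrix ℝ)).IsHermitian)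
    (hN : Tendsto N atTop atTop)
    (hconv : ∀ p : ℝ, 1 ≤ p →
      Tendsto (fun n => wassersteinDist p (normalizedESD (G n) (q n) (hA n)) semicircle)
        atTop (nhds 0)) :
    Tendsto (fun n => Real.log (q n) / Real.log (N n)) atTop (nhds 0) := by
  refine tendsto_log_div_log_of_pow_le_const_mul q N hN fun r hr =>
    ⟨2 ^ (2 * r - 1) * (1 + 2 ^ (2 * r)), ?_⟩
  have hp : (1 : ℝ) ≤ (2 * r : ℕ) := by exact_mod_cast (by omega : 1 ≤ 2 * r)
  filter_upwards [(hconv _ hp).eventually (gt_mem_nhds one_pos), hN.eventually_ne_atTop 0]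
    with n hW hNn
  have := isProbabilityMeasure_normalizedESD (G n) (q n) (hA n) hNn
  have hupper := integral_abs_pow_le_of_wassersteinDist_lt (by omega)
    (integrable_normalizedESD _ _ _ hNn _) ae_abs_le_two_semicircle hW
  have hlower := pow_div_le_integral_pow_normalizedESD (G n) (q n) (hA n) hNn (hreg n) r
  simp only [(even_two_mul r).pow_abs, one_pow] at hupper
  rw [div_le_iff₀ (by positivity)] at hlower
  exact hlower.trans (mul_le_mul_of_nonneg_right hupper (by positivity))
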